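/- Let (μ : M → P) be a crossed module, ι : P → Q a group homomorphism, and (∂ : I → Q) together with (j, ι) : (μ : M → P) → (∂ : I → Q) an induced crossed module of (μ : M → P) along ι. If M is a finite group and the image ι(P) has finite index in Q, then the group I is finite. -/

import Mathlib

universe u

/-- A crossed module `(μ : M → P)`: groups `M`, `P`, a (right) action of `P` on `M` by
group automorphisms, written `act m p` for `m ^ p`, and a homomorphism `μ : M →* P`
satisfying CM1: `μ (m ^ p) = p⁻¹ * μ m * p` and CM2: `n ^ (μ m) = m⁻¹ * n * m`. -/
structure CrossedModule (M P : Type u) [Group M] [Group P] where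
  μ : M →* P
  act : M → P → M
  act_mul : ∀ m n p, act (m * n) p = act m p * act n p
  act_one : ∀ m, act m 1 = m
  act_act : ∀ m p q, act (act m p) q = act m (p * q)
  cm1 : ∀ m p, μ (act m p) = p⁻¹ * μ m * p
  cm2 : ∀ m n, act n (μ m) = m⁻¹ * n * m

/-- A morphism of crossed modules `(f, g) : (μ : M → P) → (ν : N → Q)`:
group homomorphisms `f : M → N`, `g : P → Q` with `ν ∘ f = g ∘ μ` and
`f (m ^ p) = (f m) ^ (g p)`. -/
def CrossedModule.IsMorphism {M P N Q : Type u} [Group M] [Group P] [Group N] [Group Q]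
    (X : CrossedModule M P) (Y : CrossedModule N Q) (f : M →* N) (g : P →* Q) : Prop :=
  (∀ m, Y.μ (f m) = g (X.μ m)) ∧ ∀ m p, f (X.act m p) = Y.act (f m) (g p)

/-- `(∂ : I → Q)` together with `j : M → I` is an induced crossed module of `(μ : M → P)`
along `ι : P → Q`: `(j, ι)` is a morphism of crossed modules, and for every crossed module
`(ν : N → Q)` and morphism `(f, ι) : (μ : M → P) → (ν : N → Q)` there is a unique group
homomorphism `φ : I → N` with `ν ∘ φ = ∂`, `φ (x ^ q) = (φ x) ^ q`, and `φ ∘ j = f`. -/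
def IsInducedCrossedModule {M P Q I : Type u} [Group M] [Group P] [Group Q] [Group I]
    (X : CrossedModule M P) (ι : P →* Q) (Y : CrossedModule I Q) (j : M →* I) : Prop :=
  CrossedModule.IsMorphism X Y j ι ∧
  ∀ (N : Type u) [Group N] (Z : CrossedModule N Q) (f : M →* N),
    CrossedModule.IsMorphism X Z f ι →
    ∃! φ : I →* N, (∀ x, Z.μ (φ x) = Y.μ x) ∧
      (∀ x q, φ (Y.act x q) = Z.act (φ x) q) ∧ ∀ m, φ (j m) = f m

/-!
The elements `j(m) ^ q` (`m ∈ M`, `q ∈ Q`) form a finite set `S`: since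
`j(m) ^ (ι(p) q) = j(m ^ p) ^ q`, `q` only matters through its coset `ι(P) q`. The set `S` is
`Q`-stable, hence by CM2 closed under conjugation in `I`, and it consists of elements of finite
order. The subgroup generated by `S` is a sub-crossed module containing `j(M)`, so the universal
property forces it to be all of `I`. Dietzmann's lemma then finishes: the centralizers of the
finitely many elements of `S` have finite index, so the center does; by Schur's theorem the
commutator subgroup is finite, and the abelianization is a finitely generated torsion abelian group.
-/

open scoped commutatorElement

namespace Subgroup

variable {G : Type*} [Group G]

theorem commutatorElement_mul_mem_center {g h z w : G} (hz : z ∈ center G)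
    (hw : w ∈ center G) : ⁅g * z, h * w⁆ = ⁅g, h⁆ := by
  rw [mem_center_iff] at hz hw
  calc ⁅g * z, h * w⁆ = g * (z * (h * w) * z⁻¹) * g⁻¹ * (h * w)⁻¹ := by
        rw [commutatorElement_def]; group
    _ = g * h * (w * g⁻¹ * w⁻¹) * h⁻¹ := by rw [← hz (h * w)]; group
    _ = ⁅g, h⁆ := by rw [← hw g⁻¹, commutatorElement_def]; group

theorem finite_commutatorSet_of_finiteIndex_center [(center G).FiniteIndex] :
    Finite (commutatorSet G) := by
  let out : G ⧸ center G → G := Quotient.out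
  refine Set.finite_coe_iff.mpr <| (Set.finite_range fun c : (G ⧸ center G) × (G ⧸ center G) =>
    ⁅out c.1, out c.2⁆).subset ?_
  rintro _ ⟨g, h, rfl⟩
  obtain ⟨z, hz⟩ := QuotientGroup.mk_out_eq_mul (center G) g
  obtain ⟨w, hw⟩ := QuotientGroup.mk_out_eq_mul (center G) h
  exact ⟨(g, h), by simp only [out, hz, hw, commutatorElement_mul_mem_center z.2 w.2]⟩

theorem finiteIndex_centralizer_of_finite_conjClass {g : G}
    (hg : (ConjClasses.mk g).carrier.Finite) : (centralizer {g}).FiniteIndex := by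
  constructor
  rw [centralizer_eq_comap_stabilizer]
  refine (index_comap_of_surjective _ ConjAct.toConjAct.surjective).trans_ne ?_
  rw [MulAction.index_stabilizer, ConjAct.orbit_eq_carrier_conjClasses]
  exact ((Set.ncard_pos hg).mpr ⟨g, ConjClasses.mem_carrier_mk⟩).ne'

theorem finiteIndex_center_of_closure_eq_top {S : Set G} (hfin : S.Finite)
    (hgen : closure S = ⊤) (hconj : ∀ g, ∀ s ∈ S, g * s * g⁻¹ ∈ S) :
    (center G).FiniteIndex := by
  have : Finite S := hfin
  rw [center_eq_infi' hgen]
  refine finiteIndex_iInf fun s => finiteIndex_centralizer_of_finite_conjClass <| hfin.subset ?_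
  intro x hx
  obtain ⟨c, rfl⟩ := isConj_iff.mp <|
    (ConjClasses.mk_eq_mk_iff_isConj.mp (ConjClasses.mem_carrier_iff_mk_eq.mp hx)).symm
  exact hconj c s s.2

end Subgroup

theorem CommGroup.finite_of_closure_eq_top {A : Type*} [CommGroup A] {S : Set A}
    (hfin : S.Finite) (hgen : Subgroup.closure S = ⊤) (htor : ∀ s ∈ S, IsOfFinOrder s) :
    Finite A := by
  have : Group.FG A := Group.fg_iff.mpr ⟨S, hgen, hfin⟩
  refine finite_of_fg_isMulTorsion _ (torsion_eq_top_iff.mp ?_)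
  exact eq_top_iff.mpr (hgen ▸ (Subgroup.closure_le _).mpr htor)

/-- **Dietzmann's lemma**. -/
theorem Group.finite_of_closure_eq_top_of_conj_mem {G : Type*} [Group G] {S : Set G}
    (hfin : S.Finite) (hgen : Subgroup.closure S = ⊤) (htor : ∀ s ∈ S, IsOfFinOrder s)
    (hconj : ∀ g, ∀ s ∈ S, g * s * g⁻¹ ∈ S) : Finite G := by
  have := Subgroup.finiteIndex_center_of_closure_eq_top hfin hgen hconj
  -- With finitely many commutators, Schur's theorem (an instance) makes `commutator G` finite.
  have := Subgroup.finite_commutatorSet_of_finiteIndex_center (G := G)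
  have : Finite (G ⧸ commutator G) := show Finite (Abelianization G) by
    refine CommGroup.finite_of_closure_eq_top (hfin.image Abelianization.of) ?_ ?_
    · rw [← MonoidHom.map_closure, hgen, ← MonoidHom.range_eq_map, MonoidHom.range_eq_top]
      exact QuotientGroup.mk_surjective
    · rintro _ ⟨s, hs, rfl⟩
      exact Abelianization.of.isOfFinOrder (htor s hs)
  exact Finite.of_subgroup_quotient (commutator G)

namespace CrossedModule

variable {M P : Type u} [Group M] [Group P] (X : CrossedModule M P)

def actHom (p : P) : M →* M where
  toFun m := X.act m p
  map_one' := by simpa using X.act_mul 1 1 p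
  map_mul' m n := X.act_mul m n p

theorem conj_eq_act (g n : M) : g * n * g⁻¹ = X.act n (X.μ g⁻¹) := by
  rw [X.cm2, inv_inv]

theorem act_mem_closure {S : Set M} (hS : ∀ p, ∀ m ∈ S, X.act m p ∈ S) (p : P) {m : M}
    (hm : m ∈ Subgroup.closure S) : X.act m p ∈ Subgroup.closure S := by
  have : X.actHom p m ∈ (Subgroup.closure S).map (X.actHom p) := Subgroup.mem_map_of_mem _ hm
  rw [MonoidHom.map_closure] at this
  exact Subgroup.closure_mono (Set.image_subset_iff.mpr (hS p)) this

def restrict (K : Subgroup M) (hK : ∀ p, ∀ m ∈ K, X.act m p ∈ K) : CrossedModule K P where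
  μ := X.μ.comp K.subtype
  act m p := ⟨X.act m p, hK p m m.2⟩
  act_mul m n p := Subtype.ext (X.act_mul m n p)
  act_one m := Subtype.ext (X.act_one m)
  act_act m p q := Subtype.ext (X.act_act m p q)
  cm1 m p := X.cm1 m p
  cm2 m n := Subtype.ext (X.cm2 m n)

end CrossedModule

theorem CrossedModule.IsMorphism.finite_range_act {M P N Q : Type u} [Group M] [Group P]
    [Group N] [Group Q] {X : CrossedModule M P} {Y : CrossedModule N Q} {f : M →* N}
    {g : P →* Q} (hfg : X.IsMorphism Y f g) [Finite M] [g.range.FiniteIndex] :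
    (Set.range fun mq : M × Q => Y.act (f mq.1) mq.2).Finite := by
  refine (Set.finite_range fun mc : M × (Q ⧸ g.range) => Y.act (f mc.1) mc.2.out⁻¹).subset ?_
  rintro _ ⟨⟨m, q⟩, rfl⟩
  -- `Q ⧸ g.range` consists of left cosets, while `q` only matters through `g.range * q`.
  obtain ⟨⟨_, p, rfl⟩, hp⟩ := QuotientGroup.mk_out_eq_mul g.range q⁻¹
  refine ⟨(X.act m p, (q⁻¹ : Q)), ?_⟩
  simp only [hfg.2, Y.act_act, hp, mul_inv_rev, inv_inv, mul_inv_cancel_left]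

theorem IsInducedCrossedModule.eq_top_of_range_le {M P Q I : Type u} [Group M] [Group P]
    [Group Q] [Group I] {X : CrossedModule M P} {ι : P →* Q} {Y : CrossedModule I Q}
    {j : M →* I} (hInd : IsInducedCrossedModule X ι Y j) {K : Subgroup I}
    (hK : ∀ q, ∀ x ∈ K, Y.act x q ∈ K) (hj : j.range ≤ K) : K = ⊤ := by
  obtain ⟨hmor, huniv⟩ := hInd
  obtain ⟨φ, ⟨hφμ, hφact, hφj⟩, -⟩ :=
    huniv K (Y.restrict K hK) (j.codRestrict K fun m => hj ⟨m, rfl⟩)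
      ⟨fun m => hmor.1 m, fun m p => Subtype.ext (hmor.2 m p)⟩
  have hφ : K.subtype.comp φ = MonoidHom.id I := (huniv I Y j hmor).unique
    ⟨hφμ, fun x q => congrArg Subtype.val (hφact x q),
      fun m => congrArg Subtype.val (hφj m)⟩
    ⟨fun _ => rfl, fun _ _ => rfl, fun _ => rfl⟩
  refine eq_top_iff.mpr fun x _ => ?_
  have hx : (φ x : I) = x := DFunLike.congr_fun hφ x
  exact hx ▸ (φ x).2

theorem inducedCrossedModule_finite {M P Q I : Type u} [Group M] [Group P] [Group Q] [Group I]
    (X : CrossedModule M P) (ι : P →* Q) (Y : CrossedModule I Q) (j : M →* I)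
    (hInd : IsInducedCrossedModule X ι Y j)
    (hM : Finite M) (hQ : ι.range.FiniteIndex) :
    Finite I := by
  set S := Set.range fun mq : M × Q => Y.act (j mq.1) mq.2
  have hS : ∀ q, ∀ x ∈ S, Y.act x q ∈ S := by
    rintro q _ ⟨⟨m, q'⟩, rfl⟩
    exact ⟨(m, q' * q), (Y.act_act _ _ _).symm⟩
  refine Group.finite_of_closure_eq_top_of_conj_mem hInd.1.finite_range_act ?_ ?_ ?_
  · refine hInd.eq_top_of_range_le (fun q x hx => Y.act_mem_closure hS q hx) ?_
    rintro _ ⟨m, rfl⟩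
    exact Subgroup.subset_closure ⟨(m, 1), Y.act_one _⟩
  · rintro _ ⟨⟨m, q⟩, rfl⟩
    exact (Y.actHom q).isOfFinOrder (j.isOfFinOrder (isOfFinOrder_of_finite m))
  · intro g x hx
    rw [Y.conj_eq_act]
    exact hS _ x hx
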